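/- arXiv:2605.06023 — 7 statements merged into one kernel-verified Lean document; each statement's English description precedes it below -/
import Mathlib

section
/- (Dietzmann's Lemma, special case) Let G be a group and S a finite subset of G that is closed under conjugation and such that every element of S has finite order. Then the subgroup generated by S is finite. -/
section Dietzmann

variable {G : Type*} [Group G] [DecidableEq G] {S : Set G}


/-- Pull all occurrences of `a` in a word over `S` to the front. -/
lemma pull_front (hconj : ∀ g s : G, s ∈ S → g * s * g⁻¹ ∈ S)
    {a : G} (ha : a ∈ S) :
    ∀ l : List G, (∀ x ∈ l, x ∈ S) →
      ∃ l' : List G, (∀ x ∈ l', x ∈ S) ∧ a ∉ l' ∧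
        l'.length + l.count a = l.length ∧
        l.prod = a ^ l.count a * l'.prod := by
  intro l
  induction l with
  | nil => intro _; exact ⟨[], by simp, by simp, by simp, by simp⟩
  | cons x t ih =>
    intro hmem
    obtain ⟨l', hl'S, hl'a, hlen, hprod⟩ := ih (fun y hy => hmem y (List.mem_cons_of_mem _ hy))
    by_cases hx : x = a
    · subst hx
      refine ⟨l', hl'S, hl'a, ?_, ?_⟩
      · simp only [List.count_cons_self, List.length_cons, ← hlen]; ring
      · rw [List.prod_cons, hprod, List.count_cons_self, pow_succ']
        group
    · have hyS : (a ^ t.count a)⁻¹ * x * ((a ^ t.count a)⁻¹)⁻¹ ∈ S :=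
        hconj _ x (hmem x (List.mem_cons_self))
      have hyne : (a ^ t.count a)⁻¹ * x * ((a ^ t.count a)⁻¹)⁻¹ ≠ a := by
        intro h
        apply hx
        have h2 : x = (a ^ t.count a) * ((a ^ t.count a)⁻¹ * x * ((a ^ t.count a)⁻¹)⁻¹) * (a ^ t.count a)⁻¹ := by
          group
        rw [h2, h]; group
      refine ⟨(a ^ t.count a)⁻¹ * x * ((a ^ t.count a)⁻¹)⁻¹ :: l',
        ?_, ?_, ?_, ?_⟩
      · intro z hz
        rcases List.mem_cons.mp hz with h | h
        · rw [h]; exact hyS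
        · exact hl'S z h
      · simp only [List.mem_cons, not_or]
        exact ⟨fun h => hyne h.symm, hl'a⟩
      · simp only [List.count_cons_of_ne hx, List.length_cons, ← hlen]; ring
      · rw [List.prod_cons, List.prod_cons, hprod, List.count_cons_of_ne hx]
        group



lemma reduce (hfin : S.Finite)
    (hconj : ∀ g s : G, s ∈ S → g * s * g⁻¹ ∈ S)
    (hord : ∀ s ∈ S, IsOfFinOrder s) :
    ∀ (n : ℕ) (l : List G), l.length ≤ n → (∀ x ∈ l, x ∈ S) →
      ∃ l' : List G, (∀ x ∈ l', x ∈ S) ∧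
        l'.length ≤ ∑ s ∈ hfin.toFinset, (orderOf s - 1) ∧ l'.prod = l.prod := by
  set T := hfin.toFinset with hT
  set K := ∑ s ∈ T, (orderOf s - 1) with hK
  intro n
  induction n with
  | zero =>
    intro l hl hS
    exact ⟨l, hS, by omega, rfl⟩
  | succ n ih =>
    intro l hl hS
    by_cases hlK : l.length ≤ K
    · exact ⟨l, hS, hlK, rfl⟩
    · push_neg at hlK
      -- pigeonhole: some a ∈ S has count ≥ orderOf a
      have hsub : l.toFinset ⊆ T := fun a haa =>
        hfin.mem_toFinset.mpr (hS a (List.mem_toFinset.mp haa))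
      have hsum : ∑ a ∈ T, l.count a = l.length := by
        rw [← Finset.sum_subset hsub (fun a _ hna =>
          List.count_eq_zero.mpr (fun h => hna (List.mem_toFinset.mpr h)))]
        simpa using Multiset.toFinset_sum_count_eq (l : Multiset G)
      have hpig : ∃ a ∈ T, orderOf a ≤ l.count a := by
        by_contra hcon
        push_neg at hcon
        have : ∑ a ∈ T, l.count a ≤ ∑ a ∈ T, (orderOf a - 1) :=
          Finset.sum_le_sum (fun a haT => by
            have := hcon a haT
            omega)
        omega
      obtain ⟨a, haT, hac⟩ := hpig
      have haS : a ∈ S := hfin.mem_toFinset.mp haT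
      obtain ⟨l', hl'S, _, hlen, hprod⟩ := pull_front hconj haS l hS
      have hordpos : 0 < orderOf a := (hord a haS).orderOf_pos
      obtain ⟨l'', h1, h2, h3⟩ := ih (List.replicate (l.count a % orderOf a) a ++ l')
        (by
          have : l.count a % orderOf a < orderOf a := Nat.mod_lt _ hordpos
          simp only [List.length_append, List.length_replicate]
          omega)
        (by
          intro x hx
          rcases List.mem_append.mp hx with h | h
          · rw [List.eq_of_mem_replicate h]; exact haS
          · exact hl'S x h)
      exact ⟨l'', h1, h2, by
        rw [h3, List.prod_append, List.prod_replicate, pow_mod_orderOf, hprod]⟩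



lemma inv_word (hord : ∀ s ∈ S, IsOfFinOrder s) :
    ∀ l : List G, (∀ x ∈ l, x ∈ S) →
      ∃ m : List G, (∀ x ∈ m, x ∈ S) ∧ m.prod = l.prod⁻¹ := by
  intro l
  induction l with
  | nil => intro _; exact ⟨[], by simp, by simp⟩
  | cons x t ih =>
    intro hmem
    obtain ⟨m, hmS, hmp⟩ := ih (fun y hy => hmem y (List.mem_cons_of_mem _ hy))
    have hxS : x ∈ S := hmem x (List.mem_cons_self)
    have hxinv : x⁻¹ = x ^ (orderOf x - 1) := by
      have hpos : 0 < orderOf x := (hord x hxS).orderOf_pos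
      have : x ^ (orderOf x - 1) * x = 1 := by
        rw [← pow_succ]
        have : orderOf x - 1 + 1 = orderOf x := by omega
        rw [this, pow_orderOf_eq_one]
      exact (eq_inv_of_mul_eq_one_left this).symm
    refine ⟨m ++ List.replicate (orderOf x - 1) x, ?_, ?_⟩
    · intro y hy
      rcases List.mem_append.mp hy with h | h
      · exact hmS y h
      · rw [List.eq_of_mem_replicate h]; exact hxS
    · rw [List.prod_append, List.prod_replicate, hmp, List.prod_cons, mul_inv_rev, hxinv]

end Dietzmann

theorem stmt_1 (G : Type*) [Group G] (S : Set G) (hfin : S.Finite)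
    (hconj : ∀ g s : G, s ∈ S → g * s * g⁻¹ ∈ S)
    (hord : ∀ s ∈ S, IsOfFinOrder s) :
    (Subgroup.closure S : Set G).Finite := by
  classical
  set T := hfin.toFinset with hT
  set K := ∑ s ∈ T, (orderOf s - 1) with hK
  let H : Subgroup G :=
    { carrier := {g | ∃ l : List G, (∀ x ∈ l, x ∈ S) ∧ l.prod = g}
      one_mem' := ⟨[], by simp, by simp⟩
      mul_mem' := by
        rintro a b ⟨l1, h1, p1⟩ ⟨l2, h2, p2⟩
        exact ⟨l1 ++ l2, fun x hx => (List.mem_append.mp hx).elim (h1 x) (h2 x),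
          by rw [List.prod_append, p1, p2]⟩
      inv_mem' := by
        rintro a ⟨l, hl, hp⟩
        obtain ⟨m, hm, hmp⟩ := inv_word hord l hl
        exact ⟨m, hm, by rw [hmp, hp]⟩ }
  have hle : Subgroup.closure S ≤ H :=
    (Subgroup.closure_le H).mpr (fun s hs => ⟨[s], by simpa using hs, by simp⟩)
  have hfinT : Finite {x // x ∈ T} := inferInstance
  have hF : ((fun l : List {x // x ∈ T} => (l.map Subtype.val).prod) ''
      {l | l.length ≤ K}).Finite :=
    (List.finite_length_le _ K).image _
  apply hF.subset
  intro g hg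
  obtain ⟨l, hlS, hlp⟩ := hle hg
  obtain ⟨l', h1, h2, h3⟩ := reduce hfin hconj hord l.length l le_rfl hlS
  refine ⟨l'.attach.map (fun x => ⟨x.1, hfin.mem_toFinset.mpr (h1 x.1 x.2)⟩), ?_, ?_⟩
  · simpa using h2
  · show (List.map Subtype.val (l'.attach.map
        (fun x => (⟨x.1, hfin.mem_toFinset.mpr (h1 x.1 x.2)⟩ : {y // y ∈ T})))).prod = g
    have : List.map Subtype.val (l'.attach.map
        (fun x => (⟨x.1, hfin.mem_toFinset.mpr (h1 x.1 x.2)⟩ : {y // y ∈ T}))) = l' := by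
      rw [List.map_map]
      exact List.attach_map_subtype_val l'
    rw [this, h3, hlp]
end

section
/- Let 1 → N → G → Q → 1 be a group extension with N finite and Q icc. Then every element g ∈ G of infinite order has infinite conjugacy class in G. -/
theorem stmt_7 (G : Type*) [Group G] (N : Subgroup G) [N.Normal]
    (hNfin : (N : Set G).Finite)
    (hicc : ∀ q : G ⧸ N, q ≠ 1 → {h : G ⧸ N | ∃ x : G ⧸ N, h = x * q * x⁻¹}.Infinite)
    (g : G) (hg : ∀ n : ℕ, 1 ≤ n → g ^ n ≠ 1) :
    {h : G | ∃ x : G, h = x * g * x⁻¹}.Infinite := by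
  set π : G →* G ⧸ N := QuotientGroup.mk' N
  by_cases hq : π g = 1
  · -- g ∈ N, so finite order: contradiction
    exfalso
    have hmem : g ∈ N := (QuotientGroup.eq_one_iff g).mp hq
    haveI : Finite N := hNfin.to_subtype
    have hfo : IsOfFinOrder (⟨g, hmem⟩ : N) := isOfFinOrder_of_finite _
    have hfo' : IsOfFinOrder g := by
      obtain ⟨n, hn, hpow⟩ := hfo.exists_pow_eq_one
      exact isOfFinOrder_iff_pow_eq_one.mpr ⟨n, hn, by
        have := congrArg (Subgroup.subtype N) hpow
        simpa using this⟩
    obtain ⟨n, hn, hpow⟩ := isOfFinOrder_iff_pow_eq_one.mp hfo'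
    exact hg n hn hpow
  · have hinf := hicc (π g) hq
    have hsub : {h : G ⧸ N | ∃ x : G ⧸ N, h = x * π g * x⁻¹} ⊆
        (π : G → G ⧸ N) '' {h : G | ∃ x : G, h = x * g * x⁻¹} := by
      rintro h ⟨x, rfl⟩
      obtain ⟨y, rfl⟩ := QuotientGroup.mk'_surjective N x
      exact ⟨y * g * y⁻¹, ⟨y, rfl⟩, by simp [π]⟩
    exact Set.Infinite.of_image _ (hinf.mono hsub)
end

section
/- In a torsion group G (every element has finite order), every finite subset closed under conjugation generates a finite subgroup. -/
open Classical in
/-- Move all occurrences of `s` to the front of a word over a conjugation-closed set. -/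
private lemma dietz_sort {G : Type*} [Group G] {S : Set G}
    (hconj : ∀ g s : G, s ∈ S → g * s * g⁻¹ ∈ S) (s : G) :
    ∀ l : List G, (∀ x ∈ l, x ∈ S) →
      ∃ (j : ℕ) (w : List G), (∀ x ∈ w, x ∈ S) ∧ l.prod = s ^ j * w.prod ∧
        j + w.length = l.length ∧ l.count s ≤ j := by
  intro l
  induction l with
  | nil => intro _; exact ⟨0, [], by simp, by simp, by simp, by simp⟩
  | cons x t ih =>
    intro hmem
    obtain ⟨j, w, hw, hprod, hlen, hcount⟩ := ih (fun y hy => hmem y (List.mem_cons_of_mem _ hy))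
    by_cases hx : x = s
    · refine ⟨j + 1, w, hw, ?_, ?_, ?_⟩
      · rw [List.prod_cons, hprod, hx, pow_succ', mul_assoc]
      · simp [← hlen]; omega
      · rw [List.count_cons]
        simp [hx]
        omega
    · set x' := (s ^ j)⁻¹ * x * ((s ^ j)⁻¹)⁻¹ with hx'
      have hx'S : x' ∈ S := hconj ((s ^ j)⁻¹) x (hmem x List.mem_cons_self)
      refine ⟨j, x' :: w, ?_, ?_, ?_, ?_⟩
      · intro y hy
        rcases List.mem_cons.mp hy with h | h
        · exact h ▸ hx'S
        · exact hw y h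
      · rw [List.prod_cons, hprod, List.prod_cons, hx']
        group
      · simp [← hlen]; omega
      · rw [List.count_cons]
        simp [hx]
        omega

theorem stmt_9 (G : Type*) [Group G] (htors : ∀ g : G, IsOfFinOrder g)
    (S : Set G) (hfin : S.Finite)
    (hconj : ∀ g s : G, s ∈ S → g * s * g⁻¹ ∈ S) :
    (Subgroup.closure S : Set G).Finite := by
  classical
  set F : Finset G := hfin.toFinset with hF
  set n : ℕ := ∑ s ∈ F, orderOf s with hn
  -- every word over S has the same product as a word over S of length ≤ n
  have key : ∀ m : ℕ, ∀ l : List G, (∀ x ∈ l, x ∈ S) → l.length ≤ m →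
      ∃ l' : List G, (∀ x ∈ l', x ∈ S) ∧ l'.length ≤ n ∧ l'.prod = l.prod := by
    intro m
    induction m with
    | zero => intro l hl hlen; exact ⟨l, hl, by omega, rfl⟩
    | succ m ih =>
      intro l hl hlen
      by_cases hle : l.length ≤ n
      · exact ⟨l, hl, hle, rfl⟩
      push_neg at hle
      -- pigeonhole: some s ∈ S appears more than orderOf s times
      have hsum : ∑ s ∈ F, l.count s = l.length := by
        have := Multiset.sum_count_eq_card (s := F) (m := (l : Multiset G))
          (fun a ha => by simpa [hF] using hl a (by simpa using ha))
        simpa using this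
      have : ∃ s ∈ F, orderOf s < l.count s := by
        by_contra hcon
        push_neg at hcon
        have : l.length ≤ n := hsum ▸ hn ▸ Finset.sum_le_sum hcon
        omega
      obtain ⟨s, hsF, hcount⟩ := this
      have hsS : s ∈ S := (hfin.mem_toFinset).mp hsF
      have hord : 0 < orderOf s := (htors s).orderOf_pos
      obtain ⟨j, w, hw, hprod, hlenjw, hjcount⟩ := dietz_sort hconj s l hl
      have hj : orderOf s < j := lt_of_lt_of_le hcount hjcount
      -- replace s^j by s^(j % orderOf s)
      set l₂ : List G := List.replicate (j % orderOf s) s ++ w with hl₂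
      have hl₂mem : ∀ x ∈ l₂, x ∈ S := by
        intro x hx
        rcases List.mem_append.mp hx with h | h
        · exact (List.eq_of_mem_replicate h) ▸ hsS
        · exact hw x h
      have hl₂prod : l₂.prod = l.prod := by
        rw [hl₂, List.prod_append, List.prod_replicate, pow_mod_orderOf, hprod]
      have hl₂len : l₂.length ≤ m := by
        have h1 : j % orderOf s < orderOf s := Nat.mod_lt _ hord
        have : l₂.length = j % orderOf s + w.length := by simp [hl₂]
        omega
      obtain ⟨l', h1, h2, h3⟩ := ih l₂ hl₂mem hl₂len
      exact ⟨l', h1, h2, h3.trans hl₂prod⟩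
  -- the set of products of short words over S is finite
  have hlists : ∀ k : ℕ, {l : List G | (∀ x ∈ l, x ∈ S) ∧ l.length ≤ k}.Finite := by
    intro k
    induction k with
    | zero =>
      apply Set.Finite.subset (Set.finite_singleton ([] : List G))
      rintro l ⟨-, hlen⟩
      simp [List.length_eq_zero_iff.mp (Nat.le_zero.mp hlen)]
    | succ k ih =>
      apply Set.Finite.subset ((Set.finite_singleton ([] : List G)).union
        (Set.Finite.image2 (fun a l => a :: l) hfin ih))
      rintro l ⟨hmem, hlen⟩
      cases l with
      | nil => exact Or.inl rfl
      | cons a t =>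
        refine Or.inr (Set.mem_image2_of_mem (hmem a List.mem_cons_self) ?_)
        exact ⟨fun x hx => hmem x (List.mem_cons_of_mem _ hx), by simpa using hlen⟩
  have hT : (List.prod '' {l : List G | (∀ x ∈ l, x ∈ S) ∧ l.length ≤ n}).Finite :=
    (hlists n).image _
  -- the submonoid closure is a subgroup
  have hinv : ∀ x ∈ Submonoid.closure S, x⁻¹ ∈ Submonoid.closure S := by
    intro x hx
    have hox : 0 < orderOf x := (htors x).orderOf_pos
    have : x⁻¹ = x ^ (orderOf x - 1) := by
      rw [eq_comm, eq_inv_iff_mul_eq_one, ← pow_succ, Nat.sub_add_cancel hox, pow_orderOf_eq_one]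
    rw [this]
    exact pow_mem hx _
  set H : Subgroup G :=
    { Submonoid.closure S with inv_mem' := fun {x} hx => hinv x hx } with hH
  have hsub : Subgroup.closure S ≤ H :=
    (Subgroup.closure_le H).mpr (fun x hx => Submonoid.subset_closure hx)
  apply hT.subset
  intro x hx
  have hxH : x ∈ Submonoid.closure S := hsub hx
  obtain ⟨l, hl, hprod⟩ := Submonoid.exists_list_of_mem_closure hxH
  obtain ⟨l', h1, h2, h3⟩ := key l.length l hl le_rfl
  exact ⟨l', ⟨h1, h2⟩, h3.trans hprod⟩
end

section
/- Let G be a group with a finite normal subgroup H such that Q = G/H has the property that for every word w, if Q_w is finite then w(Q) is finite (w is concise in Q). Then for every word w, if G_w is finite then w(G) is finite. -/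
theorem stmt_12 (G : Type*) [Group G] (H : Subgroup G) [H.Normal]
    (hHfin : (H : Set G).Finite)
    (hQ : ∀ (n : ℕ) (w : FreeGroup (Fin n)),
      {q : G ⧸ H | ∃ f : Fin n → G ⧸ H, FreeGroup.lift f w = q}.Finite →
      (Subgroup.closure {q : G ⧸ H | ∃ f : Fin n → G ⧸ H, FreeGroup.lift f w = q} :
        Set (G ⧸ H)).Finite) :
    ∀ (n : ℕ) (w : FreeGroup (Fin n)),
      {g : G | ∃ f : Fin n → G, FreeGroup.lift f w = g}.Finite →
      (Subgroup.closure {g : G | ∃ f : Fin n → G, FreeGroup.lift f w = g} :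
        Set G).Finite := by
  intro n w hfin
  set S : Set G := {g : G | ∃ f : Fin n → G, FreeGroup.lift f w = g} with hS
  set π : G →* G ⧸ H := QuotientGroup.mk' H with hπ
  have hcomp : ∀ (f' : Fin n → G),
      π (FreeGroup.lift f' w) = FreeGroup.lift (π ∘ f') w := by
    intro f'
    have h : π.comp (FreeGroup.lift f') = FreeGroup.lift (⇑π ∘ f') := by
      ext x
      simp
    exact DFunLike.congr_fun h w
  have himg : π '' S = {q : G ⧸ H | ∃ f : Fin n → G ⧸ H, FreeGroup.lift f w = q} := by
    ext q
    constructor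
    · rintro ⟨g, ⟨f, rfl⟩, rfl⟩
      exact ⟨π ∘ f, (hcomp f).symm⟩
    · rintro ⟨f, rfl⟩
      choose f' hf' using fun i => QuotientGroup.mk'_surjective H (f i)
      refine ⟨FreeGroup.lift f' w, ⟨f', rfl⟩, ?_⟩
      have hff : ⇑π ∘ f' = f := funext hf'
      rw [hcomp f', hff]
  have hQfin := hQ n w (himg ▸ hfin.image π)
  have hmap : Subgroup.closure (π '' S) = (Subgroup.closure S).map π :=
    (MonoidHom.map_closure π S).symm
  have himgfin : (π '' (Subgroup.closure S : Set G)).Finite := by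
    have : (π '' (Subgroup.closure S : Set G)) =
        ((Subgroup.closure S).map π : Set (G ⧸ H)) := rfl
    rw [this, ← hmap, himg]
    exact hQfin
  -- preimage of a finite set under π is finite
  have hfiber : ∀ q : G ⧸ H, (π ⁻¹' {q}).Finite := by
    intro q
    obtain ⟨g, rfl⟩ := QuotientGroup.mk'_surjective H q
    have : π ⁻¹' {π g} = (fun h => g * h) '' (H : Set G) := by
      ext x
      simp only [Set.mem_preimage, Set.mem_singleton_iff, Set.mem_image]
      constructor
      · intro hx
        refine ⟨g⁻¹ * x, ?_, by group⟩
        have := (QuotientGroup.eq (s := H)).mp hx.symm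
        exact this
      · rintro ⟨h, hh, rfl⟩
        exact (QuotientGroup.eq (s := H)).mpr (by simpa using hh) |>.symm
    rw [this]
    exact hHfin.image _
  have hsub : (Subgroup.closure S : Set G) ⊆
      π ⁻¹' (π '' (Subgroup.closure S : Set G)) :=
    Set.subset_preimage_image π _
  have : (π ⁻¹' (π '' (Subgroup.closure S : Set G))).Finite := by
    have : π ⁻¹' (π '' (Subgroup.closure S : Set G)) =
        ⋃ q ∈ π '' (Subgroup.closure S : Set G), π ⁻¹' {q} := by
      ext x; simp [eq_comm]
    rw [this]
    exact himgfin.biUnion fun q _ => hfiber q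
  exact this.subset hsub
end

section
/- Let G be a non-abelian group satisfying the Big Powers condition and possessing, for each n, elements g₁,...,gₙ that pairwise do not commute. Then for every nontrivial word w in the free group Fₙ, the verbal set G_w = {w(h₁,...,hₙ) : hᵢ ∈ G} is infinite. -/
section Blocks

variable {β : Type*} [DecidableEq β]

/-- Group a word (list of letters with signs) into maximal blocks of equal letters. -/
def wblocks : List (β × Bool) → List (β × Bool × ℕ)
  | [] => []
  | (x, b) :: L =>
    match wblocks L with
    | [] => [(x, b, 1)]
    | (y, c, k) :: rest =>
      if x = y ∧ b = c then (y, c, k + 1) :: rest else (x, b, 1) :: (y, c, k) :: rest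

lemma wblocks_eq_nil : ∀ {L : List (β × Bool)}, wblocks L = [] ↔ L = []
  | [] => by simp [wblocks]
  | (x, b) :: L => by
    rcases h : wblocks L with _ | ⟨⟨y, c, k⟩, rest⟩
    · simp [wblocks, h]
    · simp only [wblocks, h]
      split <;> simp

lemma wblocks_cons_eq (x : β) (b : Bool) (L : List (β × Bool)) :
    wblocks ((x, b) :: L) = match wblocks L with
      | [] => [(x, b, 1)]
      | (y, c, k) :: rest =>
        if x = y ∧ b = c then (y, c, k + 1) :: rest
        else (x, b, 1) :: (y, c, k) :: rest := rfl

lemma wblocks_head (x : β) (b : Bool) (L : List (β × Bool)) :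
    ∃ k rest, wblocks ((x, b) :: L) = (x, b, k) :: rest := by
  rcases h : wblocks L with _ | ⟨⟨y, c, k⟩, rest⟩
  · exact ⟨1, [], by simp [wblocks, h]⟩
  · simp only [wblocks, h]
    by_cases hxy : x = y ∧ b = c
    · rw [if_pos hxy]
      exact ⟨k + 1, rest, by rw [hxy.1, hxy.2]⟩
    · rw [if_neg hxy]
      exact ⟨1, _, rfl⟩

lemma wblocks_pos : ∀ {L : List (β × Bool)} (q : β × Bool × ℕ), q ∈ wblocks L → 1 ≤ q.2.2
  | [], q => by simp [wblocks]
  | (x, b) :: L, q => by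
    intro hq
    rcases h : wblocks L with _ | ⟨⟨y, c, k⟩, rest⟩
    · simp only [wblocks, h] at hq
      simp at hq
      subst hq; simp
    · simp only [wblocks, h] at hq
      split at hq
      · rcases List.mem_cons.mp hq with h1 | h1
        · subst h1; simp
        · exact wblocks_pos q (h ▸ List.mem_cons_of_mem _ h1)
      · rcases List.mem_cons.mp hq with h1 | h1
        · subst h1; simp
        · exact wblocks_pos q (h ▸ h1)

lemma wblocks_chain' : ∀ {L : List (β × Bool)},
    L.Chain' (fun a b => a.1 = b.1 → a.2 = b.2) →
    (wblocks L).Chain' (fun p q => p.1 ≠ q.1)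
  | [] => by simp [wblocks, List.Chain']
  | [(x, b)] => by simp [wblocks, List.Chain']
  | (x, b) :: (y, c) :: L => fun h => by
    obtain ⟨hxy, htl⟩ := List.isChain_cons_cons.mp h
    have IH : (wblocks ((y, c) :: L)).Chain' (fun p q => p.1 ≠ q.1) := wblocks_chain' htl
    obtain ⟨k, rest, hk⟩ := wblocks_head y c L
    rw [hk] at IH
    rw [wblocks_cons_eq, hk]
    dsimp only
    by_cases hxyc : x = y ∧ b = c
    · rw [if_pos hxyc]
      obtain ⟨h1, h2⟩ := List.isChain_cons.mp IH
      exact List.isChain_cons.mpr ⟨h1, h2⟩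
    · rw [if_neg hxyc]
      have hne : x ≠ y := fun hxe => hxyc ⟨hxe, hxy hxe⟩
      exact List.isChain_cons_cons.mpr ⟨hne, IH⟩

lemma wblocks_eval {G : Type*} [Group G] (g : β → G) (t : ℕ) :
    ∀ L : List (β × Bool),
      (L.map fun x => cond x.2 (g x.1 ^ t) (g x.1 ^ t)⁻¹).prod
        = ((wblocks L).map fun q => (cond q.2.1 (g q.1) (g q.1)⁻¹) ^ (q.2.2 * t)).prod
  | [] => by simp [wblocks]
  | (x, b) :: L => by
    have IH := wblocks_eval g t L
    have hx : cond b (g x ^ t) (g x ^ t)⁻¹ = (cond b (g x) (g x)⁻¹) ^ t := by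
      cases b <;> simp [inv_pow]
    rcases hB : wblocks L with _ | ⟨⟨y, c, k⟩, rest⟩
    · have hLnil : L = [] := wblocks_eq_nil.mp hB
      subst hLnil
      simp [wblocks, hx]
    · rw [hB] at IH
      have hw : wblocks ((x, b) :: L)
          = if x = y ∧ b = c then (y, c, k + 1) :: rest
            else (x, b, 1) :: (y, c, k) :: rest := by
        simp only [wblocks, hB]
      by_cases hxy : x = y ∧ b = c
      · obtain ⟨h1, h2⟩ := hxy
        subst h1; subst h2
        rw [hw, if_pos ⟨rfl, rfl⟩]
        simp only [List.map_cons, List.prod_cons] at IH ⊢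
        rw [IH, hx, ← mul_assoc, ← pow_add]
        congr 2
        ring
      · rw [hw, if_neg hxy]
        simp only [List.map_cons, List.prod_cons] at IH ⊢
        rw [IH, hx, one_mul]

end Blocks

section NC

variable {G : Type*} [Group G] {a b : G}

lemma nc_symm (h : a * b ≠ b * a) : b * a ≠ a * b := fun he => h he.symm

lemma nc_inv_right (h : a * b ≠ b * a) : a * b⁻¹ ≠ b⁻¹ * a := fun he =>
  h (Commute.inv_right_iff.mp he)

lemma nc_inv_left (h : a * b ≠ b * a) : a⁻¹ * b ≠ b * a⁻¹ := fun he =>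
  h (Commute.inv_left_iff.mp he)

lemma nc_signed (h : a * b ≠ b * a) (b1 b2 : Bool) :
    (cond b1 a a⁻¹) * (cond b2 b b⁻¹) ≠ (cond b2 b b⁻¹) * (cond b1 a a⁻¹) := by
  cases b1 <;> cases b2 <;>
    simp only [Bool.cond_false, Bool.cond_true] <;>
    [exact nc_inv_left (nc_inv_right h); exact nc_inv_left h;
      exact nc_inv_right h; exact h]

end NC

section Reduced

variable {β : Type*} [DecidableEq β]

lemma reduce_cons_fix {a : β × Bool} {L : List (β × Bool)}
    (h : FreeGroup.reduce (a :: L) = a :: L) : FreeGroup.reduce L = L := by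
  have hlen := FreeGroup.Red.length_le (FreeGroup.reduce.red (L := L))
  rw [FreeGroup.reduce.cons] at h
  rcases hL : FreeGroup.reduce L with _ | ⟨hd, tl⟩
  · rw [hL] at h
    simp only [List.cons.injEq] at h
    exact h.2
  · rw [hL] at h hlen
    simp only at h
    split at h
    all_goals first
      | · exfalso
          have hlt := congrArg List.length h
          simp only [List.length_cons] at hlt hlen
          omega
      | · simp only [List.cons.injEq] at h
          exact h.2

lemma reduced_chain' : ∀ {L : List (β × Bool)}, FreeGroup.reduce L = L →
    L.Chain' (fun a b => a.1 = b.1 → a.2 = b.2)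
  | [] => by simp [List.Chain']
  | [_] => by simp [List.Chain']
  | a :: b :: L => fun h => by
    have h' := reduce_cons_fix h
    refine List.isChain_cons_cons.mpr ⟨?_, reduced_chain' h'⟩
    intro hab
    by_contra hne
    have hcond : a.1 = b.1 ∧ a.2 = !b.2 := ⟨hab, Bool.eq_not_iff.mpr hne⟩
    rw [FreeGroup.reduce.cons, h'] at h
    simp only at h
    rw [if_pos hcond] at h
    have := congrArg List.length h
    simp only [List.length_cons] at this
    omega

end Reduced

section BPList

variable {G : Type*} [Group G]

lemma bp_list
    (hBP : ∀ (k : ℕ) (u : Fin (k + 1) → G),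
      (∀ i, u i ≠ 1) →
      (∀ i : Fin k, u i.castSucc * u i.succ ≠ u i.succ * u i.castSucc) →
      ∃ N : ℕ, ∀ α : Fin (k + 1) → ℕ, (∀ i, N ≤ α i) →
        (List.ofFn fun i => u i ^ α i).prod ≠ 1)
    (V : List G) (hVne : V ≠ [])
    (hV1 : ∀ v ∈ V, v ≠ 1)
    (hVc : V.Chain' fun x y => x * y ≠ y * x) :
    ∃ N : ℕ, ∀ P : List (G × ℕ), P.map Prod.fst = V → (∀ p ∈ P, N ≤ p.2) →
      (P.map fun p => p.1 ^ p.2).prod ≠ 1 := by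
  obtain ⟨k, hk⟩ : ∃ k, V.length = k + 1 := by
    rcases V with _ | ⟨v, V⟩
    · exact absurd rfl hVne
    · exact ⟨V.length, rfl⟩
  have hcg := List.isChain_iff_getElem.mp hVc
  obtain ⟨N, hN⟩ := hBP k (fun i => V.get (Fin.cast hk.symm i))
    (fun i => hV1 _ (V.get_mem _))
    (fun i => hcg i.1 (by omega))
  refine ⟨N, fun P hPV hPge => ?_⟩
  subst hPV
  have hPlen : P.length = k + 1 := by simpa using hk
  have hkey : P.map (fun p => p.1 ^ p.2)
      = List.ofFn (fun i : Fin (k + 1) =>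
          (P.map Prod.fst).get (Fin.cast hk.symm i) ^ (P.get (Fin.cast hPlen.symm i)).2) := by
    apply List.ext_get
    · simp [hPlen]
    · intro i h1 h2
      simp only [List.get_eq_getElem, List.getElem_map, List.getElem_ofFn, Fin.coe_cast,
        List.getElem_map]
  rw [hkey]
  exact hN _ (fun i => hPge _ (P.get_mem _))

lemma sep_lemma
    (hBP : ∀ (k : ℕ) (u : Fin (k + 1) → G),
      (∀ i, u i ≠ 1) →
      (∀ i : Fin k, u i.castSucc * u i.succ ≠ u i.succ * u i.castSucc) →
      ∃ N : ℕ, ∀ α : Fin (k + 1) → ℕ, (∀ i, N ≤ α i) →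
        (List.ofFn fun i => u i ^ α i).prod ≠ 1)
    (B : List (G × ℕ)) (hne : B ≠ [])
    (h1 : ∀ p ∈ B, p.1 ≠ 1)
    (hc : B.Chain' fun p q => p.1 * q.1 ≠ q.1 * p.1)
    (hpos : ∀ p ∈ B, 1 ≤ p.2) :
    ∃ N : ℕ, 1 ≤ N ∧ ∀ s t : ℕ, N ≤ s → s + N ≤ t →
      (B.map fun p => p.1 ^ (p.2 * t)).prod ≠ (B.map fun p => p.1 ^ (p.2 * s)).prod := by
  set F := B.dropLast with hF
  set q := B.getLast hne with hq
  have hBF : F ++ [q] = B := List.dropLast_append_getLast hne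
  have hFB : ∀ p ∈ F, p ∈ B := fun p hp => (List.dropLast_sublist B).mem hp
  have hqB : q ∈ B := List.getLast_mem hne
  have hc' : (F ++ [q]).Chain' fun p q => p.1 * q.1 ≠ q.1 * p.1 := by rw [hBF]; exact hc
  obtain ⟨hcF, hcQ, hlink⟩ := List.isChain_append.mp hc'
  -- the fixed list of elements
  set V : List G := ((F.map fun p => p.1) ++ [q.1]) ++ (F.map fun p => p.1⁻¹).reverse with hV
  have hVne : V ≠ [] := by simp [hV]
  have hV1 : ∀ v ∈ V, v ≠ 1 := by
    intro v hv
    simp only [hV, List.mem_append, List.mem_reverse, List.mem_map] at hv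
    rcases hv with (⟨p, hp, rfl⟩ | hv) | ⟨p, hp, rfl⟩
    · exact h1 p (hFB p hp)
    · simp only [List.mem_singleton] at hv
      subst hv; exact h1 q hqB
    · simp only [ne_eq, inv_eq_one]
      exact h1 p (hFB p hp)
  have hVc : V.Chain' fun x y => x * y ≠ y * x := by
    apply List.isChain_append.mpr
    refine ⟨?_, ?_, ?_⟩
    · have : ((F ++ [q]).map Prod.fst).Chain' fun x y => x * y ≠ y * x :=
        (List.isChain_map Prod.fst).mpr hc'
      simpa [List.Chain'] using this
    · rw [List.isChain_reverse]
      apply (List.isChain_map _).mpr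
      exact hcF.imp fun a b h => nc_symm (nc_inv_left (nc_inv_right h))
    · intro x hx y hy
      rcases F with _ | ⟨f0, F'⟩
      · simp at hy
      · rw [List.getLast?_concat] at hx
        simp only [Option.mem_def, Option.some.injEq] at hx
        subst hx
        rw [List.head?_reverse] at hy
        have hlast : ((f0 :: F').map fun p => p.1⁻¹).getLast? =
            some (((f0 :: F').getLast (by simp)).1⁻¹) := by
          rw [List.getLast?_eq_getLast (by simp), List.getLast_map]
        rw [hlast] at hy
        simp only [Option.mem_def, Option.some.injEq] at hy
        subst hy
        have hR : ((f0 :: F').getLast (by simp)).1 * q.1 ≠ q.1 * ((f0 :: F').getLast (by simp)).1 := by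
          apply hlink
          · rw [List.getLast?_eq_getLast (by simp)]
            rfl
          · simp
        exact nc_inv_right (nc_symm hR)
  obtain ⟨N₀, hN₀⟩ := bp_list hBP V hVne hV1 hVc
  set M := max N₀ 1 with hM
  have hM1 : 1 ≤ M := le_max_right _ _
  have hMN : N₀ ≤ M := le_max_left _ _
  refine ⟨M, hM1, ?_⟩
  intro s t hs hst heq
  have hts : s ≤ t := by omega
  have hsN : N₀ ≤ s := hMN.trans hs
  have htsN : N₀ ≤ t - s := by omega
  set P : List (G × ℕ) := ((F.map fun p => (p.1, p.2 * t)) ++ [(q.1, q.2 * (t - s))])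
      ++ (F.map fun p => (p.1⁻¹, p.2 * s)).reverse with hP
  have hPV : P.map Prod.fst = V := by
    simp [hP, hV, List.map_map, Function.comp_def]
  have hPge : ∀ p ∈ P, N₀ ≤ p.2 := by
    intro p hp
    simp only [hP, List.mem_append, List.mem_reverse, List.mem_map] at hp
    rcases hp with (⟨r, hr, rfl⟩ | hp) | ⟨r, hr, rfl⟩
    · have h1r := hpos r (hFB r hr)
      have : t ≤ r.2 * t := Nat.le_mul_of_pos_left t h1r
      omega
    · simp only [List.mem_singleton] at hp
      subst hp
      have h1q := hpos q hqB
      have : t - s ≤ q.2 * (t - s) := Nat.le_mul_of_pos_left _ h1q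
      simp only
      omega
    · have h1r := hpos r (hFB r hr)
      have : s ≤ r.2 * s := Nat.le_mul_of_pos_left s h1r
      simp only
      omega
  apply hN₀ P hPV hPge
  have hC : ((F.map fun p => (p.1⁻¹ : G) ^ (p.2 * s)).reverse).prod
      = ((F.map fun p => p.1 ^ (p.2 * s)).prod)⁻¹ := by
    rw [List.prod_inv_reverse, List.map_map]
    congr 1
    · simp [Function.comp, inv_pow]
  have hqpow : (q.1 : G) ^ (q.2 * t) = q.1 ^ (q.2 * (t - s)) * q.1 ^ (q.2 * s) := by
    rw [← pow_add]
    congr 1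
    rw [← Nat.mul_add, Nat.sub_add_cancel hts]
  have hPprod : (P.map fun p => p.1 ^ p.2).prod
      = ((B.map fun p => p.1 ^ (p.2 * t)).prod) * ((B.map fun p => p.1 ^ (p.2 * s)).prod)⁻¹ := by
    conv_rhs => rw [← hBF]
    simp only [hP, List.map_append, List.prod_append, List.map_map, List.map_reverse,
      List.map_cons, List.map_nil, List.prod_cons, List.prod_nil, mul_one, Function.comp_def]
    rw [hC, hqpow]
    simp [mul_assoc, mul_inv_rev, inv_mul_cancel_left]
  rw [hPprod, heq]
  simp

end BPList

theorem stmt_14 (G : Type*) [Group G]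
    (hnonab : ∃ a b : G, a * b ≠ b * a)
    (hBP : ∀ (k : ℕ) (u : Fin (k + 1) → G),
      (∀ i, u i ≠ 1) →
      (∀ i : Fin k, u i.castSucc * u i.succ ≠ u i.succ * u i.castSucc) →
      ∃ N : ℕ, ∀ α : Fin (k + 1) → ℕ, (∀ i, N ≤ α i) →
        (List.ofFn fun i => u i ^ α i).prod ≠ 1)
    (hlarge : ∀ n : ℕ, ∃ g : Fin n → G, ∀ i j, i ≠ j → g i * g j ≠ g j * g i)
    (n : ℕ) (w : FreeGroup (Fin n)) (hw : w ≠ 1) :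
    {x : G | ∃ f : Fin n → G, FreeGroup.lift f w = x}.Infinite := by
  classical
  obtain ⟨g', hg'⟩ := hlarge (n + 1)
  set g : Fin n → G := fun i => g' i.castSucc with hgdef
  have hgnc : ∀ i j : Fin n, i ≠ j → g i * g j ≠ g j * g i := by
    intro i j hij
    exact hg' _ _ (fun h => hij (Fin.castSucc_injective n h))
  have hg1 : ∀ i, g i ≠ 1 := by
    intro i h
    exact hg' i.castSucc (Fin.last n) (Fin.castSucc_lt_last i).ne
      (by rw [show g' i.castSucc = 1 from h, one_mul, mul_one])
  set Bl := wblocks w.toWord with hBldef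
  have hBlne : Bl ≠ [] := fun h =>
    hw (FreeGroup.toWord_eq_nil_iff.mp (wblocks_eq_nil.mp h))
  have hBlchain : Bl.Chain' (fun p q => p.1 ≠ q.1) :=
    wblocks_chain' (reduced_chain' (FreeGroup.reduce_toWord w))
  set B : List (G × ℕ) := Bl.map fun q => ((cond q.2.1 (g q.1) (g q.1)⁻¹), q.2.2) with hBdef
  have hBne : B ≠ [] := by
    simp only [hBdef, ne_eq, List.map_eq_nil_iff]
    exact hBlne
  have hB1 : ∀ p ∈ B, p.1 ≠ 1 := by
    intro p hp
    simp only [hBdef, List.mem_map] at hp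
    obtain ⟨r, hr, rfl⟩ := hp
    cases hb : r.2.1 <;> simp [hg1 r.1]
  have hBc : B.Chain' fun p q => p.1 * q.1 ≠ q.1 * p.1 := by
    apply (List.isChain_map _).mpr
    refine hBlchain.imp ?_
    intro a b hab
    exact nc_signed (hgnc _ _ hab) _ _
  have hBpos : ∀ p ∈ B, 1 ≤ p.2 := by
    intro p hp
    simp only [hBdef, List.mem_map] at hp
    obtain ⟨r, hr, rfl⟩ := hp
    exact wblocks_pos r hr
  obtain ⟨N, hN1, hsep⟩ := sep_lemma hBP B hBne hB1 hBc hBpos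
  have hval : ∀ T : ℕ, FreeGroup.lift (fun i => g i ^ T) w
      = (B.map fun p => p.1 ^ (p.2 * T)).prod := by
    intro T
    conv_lhs => rw [← FreeGroup.mk_toWord (x := w)]
    rw [FreeGroup.lift_mk]
    have := wblocks_eval g T w.toWord
    simp only [hBdef, hBldef, List.map_map, Function.comp]
    exact this
  apply Set.infinite_of_injective_forall_mem
    (f := fun k : ℕ => (B.map fun p => p.1 ^ (p.2 * (N * (k + 1)))).prod)
  · intro k k' hkk
    by_contra hne
    rcases lt_or_gt_of_ne hne with hlt | hlt
    · exact hsep (N * (k + 1)) (N * (k' + 1))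
        (by nlinarith) (by nlinarith) hkk.symm
    · exact hsep (N * (k' + 1)) (N * (k + 1))
        (by nlinarith) (by nlinarith) hkk
  · intro k
    exact ⟨fun i => g i ^ (N * (k + 1)), hval _⟩
end

section
/- The torus knot group T(n,m) = ⟨x, y | xⁿ = yᵐ⟩ embeds into ℤ × (ℤ/nℤ * ℤ/mℤ) via x ↦ (m, a), y ↦ (n, b), where a, b are the generators of the free factors, and this map is an injective group homomorphism. -/
open Multiplicative

def zmodPow {G : Type*} [Group G] (k : ℕ) (g : G) (hg : g ^ (k : ℤ) = 1) :
    Multiplicative (ZMod k) →* G :=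
  AddMonoidHom.toMultiplicativeLeft
    (ZMod.lift k ⟨MonoidHom.toAdditiveRight (zpowersHom G g), by simpa [← ofMul_pow] using congrArg Additive.ofMul hg⟩)

lemma zmodPow_intCast {G : Type*} [Group G] (k : ℕ) (g : G) (hg : g ^ (k : ℤ) = 1) (x : ℤ) :
    zmodPow k g hg (ofAdd ((x : ZMod k))) = g ^ x := by
  simp [zmodPow, ZMod.lift_coe]

lemma zmodPow_one {G : Type*} [Group G] (k : ℕ) (g : G) (hg : g ^ (k : ℤ) = 1) :
    zmodPow k g hg (ofAdd (1 : ZMod k)) = g := by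
  have := zmodPow_intCast k g hg 1
  simpa using this

section TorusKnot

variable (n m : ℕ)

def rels1 : Set (FreeGroup (Fin 2)) :=
  {FreeGroup.of (0 : Fin 2) ^ n * (FreeGroup.of (1 : Fin 2) ^ m)⁻¹}

def rels2 : Set (FreeGroup (Fin 2)) :=
  {FreeGroup.of (0 : Fin 2) ^ n, FreeGroup.of (1 : Fin 2) ^ m}

lemma mk2_eq_one : ∀ r ∈ rels2 n m, PresentedGroup.mk (rels2 n m) r = 1 := fun r hr =>
  (QuotientGroup.eq_one_iff r).mpr (Subgroup.subset_normalClosure hr)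

lemma of0_pow : (PresentedGroup.of (rels := rels2 n m) 0) ^ n = 1 := by
  have := mk2_eq_one n m _ (Set.mem_insert _ _)
  simpa [PresentedGroup.of, map_pow] using this

lemma of1_pow : (PresentedGroup.of (rels := rels2 n m) 1) ^ m = 1 := by
  have := mk2_eq_one n m _ (Set.mem_insert_of_mem _ rfl)
  simpa [PresentedGroup.of, map_pow] using this

/-- the map P2 → coprod -/
def piC : PresentedGroup (rels2 n m) →*
    Monoid.Coprod (Multiplicative (ZMod n)) (Multiplicative (ZMod m)) :=
  PresentedGroup.toGroup (f := ![Monoid.Coprod.inl (ofAdd (1 : ZMod n)),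
      Monoid.Coprod.inr (ofAdd (1 : ZMod m))]) (by
    rintro r (rfl | rfl) <;>
    · simp only [map_pow, FreeGroup.lift_apply_of, Matrix.cons_val_zero, Matrix.cons_val_one,
        Matrix.head_cons]
      rw [← map_pow, ← ofAdd_nsmul]
      simp [nsmul_eq_mul, ZMod.natCast_self])

/-- the section coprod → P2 -/
def sigmaC : Monoid.Coprod (Multiplicative (ZMod n)) (Multiplicative (ZMod m)) →*
    PresentedGroup (rels2 n m) :=
  Monoid.Coprod.lift
    (zmodPow n _ (by simpa using of0_pow n m))
    (zmodPow m _ (by simpa using of1_pow n m))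

lemma sigma_pi : (sigmaC n m).comp (piC n m) = MonoidHom.id _ := by
  ext i
  fin_cases i <;>
    simp [piC, sigmaC, PresentedGroup.toGroup.of, zmodPow_one]

lemma pi_injective : Function.Injective (piC n m) := by
  have h : Function.LeftInverse (sigmaC n m) (piC n m) := fun x =>
    DFunLike.congr_fun (sigma_pi n m) x
  exact h.injective

/-- map P1 → P2 -/
def theta : PresentedGroup (rels1 n m) →* PresentedGroup (rels2 n m) :=
  PresentedGroup.toGroup (f := fun i => PresentedGroup.of i) (by
    rintro r rfl
    simp [FreeGroup.lift_apply_of, of0_pow, of1_pow])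

lemma theta_mk (w : FreeGroup (Fin 2)) :
    theta n m (PresentedGroup.mk (rels1 n m) w) = PresentedGroup.mk (rels2 n m) w := by
  have : (theta n m).comp (PresentedGroup.mk (rels1 n m)) = PresentedGroup.mk (rels2 n m) := by
    ext i
    show theta n m (PresentedGroup.of i) = PresentedGroup.of i
    simp [theta]
  exact DFunLike.congr_fun this w

lemma rel1_eq : (PresentedGroup.of (rels := rels1 n m) 0) ^ n
    = (PresentedGroup.of (rels := rels1 n m) 1) ^ m := by
  have h : PresentedGroup.mk (rels1 n m)
      (FreeGroup.of (0 : Fin 2) ^ n * (FreeGroup.of (1 : Fin 2) ^ m)⁻¹) = 1 :=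
    (QuotientGroup.eq_one_iff _).mpr (Subgroup.subset_normalClosure rfl)
  rw [map_mul, map_inv, mul_inv_eq_one, map_pow, map_pow] at h
  exact h

lemma c_central : ∀ g : PresentedGroup (rels1 n m),
    Commute ((PresentedGroup.of (rels := rels1 n m) 0) ^ n) g := by
  intro g
  induction g with
  | H w =>
    induction w using FreeGroup.induction_on with
    | C1 => simp
    | of i =>
      fin_cases i
      · exact (Commute.refl _).pow_left n
      · rw [rel1_eq]
        exact (Commute.refl _).pow_left m
    | inv_of i h => simpa using h.inv_right
    | mul a b ha hb => simpa using ha.mul_right hb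

lemma ker_theta (g : PresentedGroup (rels1 n m)) (hg : theta n m g = 1) :
    ∃ k : ℤ, g = ((PresentedGroup.of (rels := rels1 n m) 0) ^ n) ^ k := by
  obtain ⟨w, rfl⟩ := PresentedGroup.mk_surjective (rels1 n m) g
  rw [theta_mk] at hg
  have hw : w ∈ Subgroup.normalClosure (rels2 n m) := (QuotientGroup.eq_one_iff w).mp hg
  set c : PresentedGroup (rels1 n m) := (PresentedGroup.of (rels := rels1 n m) 0) ^ n with hc
  have hmap : PresentedGroup.mk (rels1 n m) w ∈
      Subgroup.map (PresentedGroup.mk (rels1 n m)) (Subgroup.normalClosure (rels2 n m)) :=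
    ⟨w, hw, rfl⟩
  rw [Subgroup.map_normalClosure _ _ (PresentedGroup.mk_surjective _)] at hmap
  have himg : (PresentedGroup.mk (rels1 n m)) '' (rels2 n m) = {c} := by
    have h1 : PresentedGroup.mk (rels1 n m) (FreeGroup.of (0 : Fin 2) ^ n) = c := by
      rw [map_pow]; rfl
    have h2 : PresentedGroup.mk (rels1 n m) (FreeGroup.of (1 : Fin 2) ^ m) = c := by
      rw [map_pow, hc, rel1_eq]; rfl
    rw [rels2, Set.image_insert_eq, Set.image_singleton, h1, h2, Set.insert_eq_self]
    rfl
  rw [himg] at hmap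
  haveI hnorm : (Subgroup.zpowers c).Normal := by
    constructor
    intro x hx g
    obtain ⟨k, rfl⟩ := hx
    have hcom : Commute (c ^ k) g := ((c_central n m g).zpow_left k)
    rw [hcom.symm.eq, mul_assoc, mul_inv_cancel, mul_one]
    exact Subgroup.zpow_mem _ (Subgroup.mem_zpowers c) k
  have hle : Subgroup.normalClosure {c} ≤ Subgroup.zpowers c :=
    Subgroup.normalClosure_le_normal (Set.singleton_subset_iff.mpr (Subgroup.mem_zpowers c))
  obtain ⟨k, hk⟩ := hle hmap
  exact ⟨k, hk.symm⟩


def phiT : PresentedGroup (rels1 n m) →*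
    Multiplicative ℤ × Monoid.Coprod (Multiplicative (ZMod n)) (Multiplicative (ZMod m)) :=
  PresentedGroup.toGroup
    (f := ![(ofAdd (m : ℤ), Monoid.Coprod.inl (ofAdd (1 : ZMod n))),
      (ofAdd (n : ℤ), Monoid.Coprod.inr (ofAdd (1 : ZMod m)))]) (by
    rintro r rfl
    simp only [map_mul, map_pow, map_inv, FreeGroup.lift_apply_of,
      Matrix.cons_val_zero, Matrix.cons_val_one, Matrix.head_cons]
    rw [mul_inv_eq_one, Prod.pow_mk, Prod.pow_mk, Prod.mk.injEq]
    constructor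
    · rw [← ofAdd_nsmul, ← ofAdd_nsmul, nsmul_eq_mul, nsmul_eq_mul, mul_comm]
    · rw [← MonoidHom.map_pow, ← MonoidHom.map_pow, ← ofAdd_nsmul, ← ofAdd_nsmul]
      simp [nsmul_eq_mul, ZMod.natCast_self])

lemma phiT_of0 : phiT n m (PresentedGroup.of 0) =
    (ofAdd (m : ℤ), Monoid.Coprod.inl (ofAdd (1 : ZMod n))) :=
  PresentedGroup.toGroup.of _

lemma phiT_of1 : phiT n m (PresentedGroup.of 1) =
    (ofAdd (n : ℤ), Monoid.Coprod.inr (ofAdd (1 : ZMod m))) :=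
  PresentedGroup.toGroup.of _

lemma phiT_snd : (MonoidHom.snd _ _).comp (phiT n m) = (piC n m).comp (theta n m) := by
  ext i
  simp only [MonoidHom.comp_apply]
  have h1 : theta n m (PresentedGroup.of i) = PresentedGroup.of i :=
    PresentedGroup.toGroup.of _
  have h2 : piC n m (PresentedGroup.of i) =
      ![Monoid.Coprod.inl (ofAdd (1 : ZMod n)), Monoid.Coprod.inr (ofAdd (1 : ZMod m))] i :=
    PresentedGroup.toGroup.of _
  rw [h1, h2]
  fin_cases i
  · rw [show (⟨0, by norm_num⟩ : Fin 2) = 0 from rfl, phiT_of0]; rfl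
  · rw [show (⟨1, by norm_num⟩ : Fin 2) = 1 from rfl, phiT_of1]; rfl

lemma phiT_injective (hn : 0 < n) (hm : 0 < m) : Function.Injective (phiT n m) := by
  rw [injective_iff_map_eq_one]
  intro g hg
  have hθ : piC n m (theta n m g) = 1 := by
    have h2 := DFunLike.congr_fun (phiT_snd n m) g
    simp only [MonoidHom.comp_apply, hg, map_one] at h2
    exact h2.symm
  have hθ1 : theta n m g = 1 := pi_injective n m (by rw [hθ, map_one])
  obtain ⟨k, rfl⟩ := ker_theta n m g hθ1
  have h1 := congrArg (MonoidHom.fst (Multiplicative ℤ)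
    (Monoid.Coprod (Multiplicative (ZMod n)) (Multiplicative (ZMod m)))) hg
  simp only [map_one, map_zpow, map_pow, phiT_of0, MonoidHom.coe_fst] at h1
  rw [← ofAdd_nsmul, ← ofAdd_zsmul] at h1
  have h0 : k • n • (m : ℤ) = 0 := by
    have := congrArg Multiplicative.toAdd h1
    simp only [toAdd_ofAdd, toAdd_one] at this
    exact this
  rw [smul_eq_mul, nsmul_eq_mul] at h0
  have hk : k = 0 := by
    rcases mul_eq_zero.mp h0 with h | h
    · exact h
    · exfalso
      have : (0:ℤ) < n * m := by positivity
      omega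
  rw [hk, zpow_zero]

end TorusKnot

theorem stmt_18 (n m : ℕ) (hn : 1 < n) (hm : 1 < m) (hcop : Nat.Coprime n m) :
    ∃ φ : PresentedGroup
        ({FreeGroup.of (0 : Fin 2) ^ n * (FreeGroup.of (1 : Fin 2) ^ m)⁻¹} :
          Set (FreeGroup (Fin 2))) →*
      Multiplicative ℤ × Monoid.Coprod (Multiplicative (ZMod n)) (Multiplicative (ZMod m)),
      Function.Injective φ ∧
      φ (PresentedGroup.of 0) =
        (Multiplicative.ofAdd (m : ℤ), Monoid.Coprod.inl (Multiplicative.ofAdd (1 : ZMod n))) ∧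
      φ (PresentedGroup.of 1) =
        (Multiplicative.ofAdd (n : ℤ), Monoid.Coprod.inr (Multiplicative.ofAdd (1 : ZMod m))) := by
  exact ⟨phiT n m, phiT_injective n m (by omega) (by omega), phiT_of0 n m, phiT_of1 n m⟩
end

section
/- Let G be a group, S ⊆ G a finite normal subset (closed under conjugation) and H = ⟨S⟩. Then H is finite if and only if the image of every s ∈ S in the abelianization H/[H,H] has finite order. -/
open scoped commutatorElement

private lemma aux_mul_central_swap {K : Type*} [Group K] (x y c : K)
    (hc : c ∈ Subgroup.center K) : x * c * y = x * y * c := by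
  rw [mul_assoc, ← Subgroup.mem_center_iff.mp hc y, ← mul_assoc]

private lemma aux_comm_central {K : Type*} [Group K] (a b z w : K)
    (hz : z ∈ Subgroup.center K) (hw : w ∈ Subgroup.center K) :
    ⁅a * z, b * w⁆ = ⁅a, b⁆ := by
  simp only [commutatorElement_def, mul_inv_rev, ← mul_assoc]
  rw [aux_mul_central_swap a b z hz, aux_mul_central_swap (a * b) w z hz,
    mul_inv_cancel_right, aux_mul_central_swap (a * b) a⁻¹ w hw, mul_inv_cancel_right]

private lemma aux_finite_commutatorSet (K : Type*) [Group K]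
    [Subgroup.FiniteIndex (Subgroup.center K)] : Finite (commutatorSet K) := by
  haveI : Finite (K ⧸ Subgroup.center K) := Subgroup.finite_quotient_of_finiteIndex
  set f : (K ⧸ Subgroup.center K) × (K ⧸ Subgroup.center K) → K :=
    fun p => ⁅(Quotient.out p.1 : K), Quotient.out p.2⁆ with hf
  have hsub : commutatorSet K ⊆ Set.range f := by
    rintro x ⟨a, b, rfl⟩
    refine ⟨(QuotientGroup.mk a, QuotientGroup.mk b), ?_⟩
    have ha : ((QuotientGroup.mk a : K ⧸ Subgroup.center K).out)⁻¹ * a ∈ Subgroup.center K :=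
      QuotientGroup.eq.mp (QuotientGroup.out_eq' _)
    have hb : ((QuotientGroup.mk b : K ⧸ Subgroup.center K).out)⁻¹ * b ∈ Subgroup.center K :=
      QuotientGroup.eq.mp (QuotientGroup.out_eq' _)
    have ha' : a = (QuotientGroup.mk a : K ⧸ Subgroup.center K).out *
        (((QuotientGroup.mk a : K ⧸ Subgroup.center K).out)⁻¹ * a) := by group
    have hb' : b = (QuotientGroup.mk b : K ⧸ Subgroup.center K).out *
        (((QuotientGroup.mk b : K ⧸ Subgroup.center K).out)⁻¹ * b) := by group
    show f _ = ⁅a, b⁆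
    rw [hf]
    dsimp only
    conv_rhs => rw [ha', hb']
    rw [aux_comm_central _ _ _ _ ha hb]
  exact Set.finite_coe_iff.mpr ((Set.finite_range f).subset hsub)

theorem stmt_19 (G : Type*) [Group G] (S : Set G) (hfin : S.Finite)
    (hconj : ∀ g s : G, s ∈ S → g * s * g⁻¹ ∈ S) :
    (Subgroup.closure S : Set G).Finite ↔
      ∀ (s : G) (hs : s ∈ S),
        IsOfFinOrder (Abelianization.of
          (⟨s, Subgroup.subset_closure hs⟩ : Subgroup.closure S)) := by
  constructor
  · intro h s hs
    haveI : Finite ↥(Subgroup.closure S) := h.to_subtype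
    haveI : Finite (Abelianization ↥(Subgroup.closure S)) := Quotient.finite _
    exact isTorsion_of_finite _
  · intro hT
    set H := Subgroup.closure S with hH
    let T : Set ↥H := ((↑) : ↥H → G) ⁻¹' S
    have hTfin : T.Finite := hfin.preimage Subtype.coe_injective.injOn
    have hTtop : Subgroup.closure T = ⊤ := Subgroup.closure_closure_coe_preimage
    haveI : Finite ↥T := hTfin.to_subtype
    haveI : Group.FG ↥H := Group.fg_iff.mpr ⟨T, hTtop, hTfin⟩
    -- each generator has finite-index centralizer
    have hcent : ∀ s : ↥H, (s : G) ∈ S →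
        Subgroup.FiniteIndex (Subgroup.centralizer (Subgroup.zpowers s : Set ↥H)) := by
      intro s hs
      have horb : MulAction.orbit (ConjAct ↥H) s ⊆ T := by
        rintro x ⟨g, rfl⟩
        show ((g • s : ↥H) : G) ∈ S
        rw [ConjAct.smul_def]
        push_cast
        exact hconj _ _ hs
      haveI : Finite (MulAction.orbit (ConjAct ↥H) s) := (hTfin.subset horb).to_subtype
      haveI : Finite (↥H ⧸ Subgroup.centralizer (Subgroup.zpowers s : Set ↥H)) :=
        Finite.of_equiv _ ((MulAction.orbitEquivQuotientStabilizer (ConjAct ↥H) s).trans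
          (Subgroup.quotientEquivOfEq ((ConjAct.stabilizer_eq_centralizer s).trans
            (by rw [Subgroup.zpowers_eq_closure, Subgroup.centralizer_closure]; rfl))))
      exact Subgroup.finiteIndex_of_finite_quotient
    haveI : (Subgroup.center ↥H).FiniteIndex := by
      rw [Subgroup.center_eq_infi' hTtop]
      exact Subgroup.finiteIndex_iInf fun s : ↥T => by
        have := hcent s s.2
        rwa [Subgroup.zpowers_eq_closure, Subgroup.centralizer_closure] at this
    haveI : Finite (commutatorSet ↥H) := aux_finite_commutatorSet ↥H
    haveI : Finite (commutator ↥H) := inferInstance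
    -- the abelianization is finite
    have htor : Monoid.IsTorsion (Abelianization ↥H) := by
      intro x
      obtain ⟨h, rfl⟩ : ∃ h : ↥H, Abelianization.of h = x :=
        Quotient.inductionOn x fun h => ⟨h, rfl⟩
      have hmem : h ∈ Subgroup.closure T := hTtop ▸ Subgroup.mem_top h
      induction hmem using Subgroup.closure_induction with
      | mem g hg => exact hT (g : G) hg
      | one => simp
      | mul g₁ g₂ h₁ h₂ ih₁ ih₂ =>
          rw [map_mul]
          exact (Commute.all _ _).isOfFinOrder_mul ih₁ ih₂
      | inv g hg ih =>
          rw [map_inv]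
          exact isOfFinOrder_inv_iff.mpr ih
    haveI : Group.FG (Abelianization ↥H) :=
      Group.fg_of_surjective (f := Abelianization.of)
        (fun x => Quotient.inductionOn x fun h => ⟨h, rfl⟩)
    haveI : Finite (Abelianization ↥H) := CommGroup.finite_of_fg_torsion _ htor
    haveI : Finite (↥H ⧸ commutator ↥H) := ‹Finite (Abelianization ↥H)›
    haveI : Finite ↥H :=
      Finite.of_equiv _ (Subgroup.groupEquivQuotientProdSubgroup (s := commutator ↥H)).symm
    exact Set.finite_coe_iff.mp ‹Finite ↥H›
end
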